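/- For bounded selfadjoint operators H and H' on a complex Hilbert space, the Duhamel formula holds: exp(−itH) − exp(−itH') = −i ∫₀ᵗ exp(−isH)·(H − H')·exp(−i(t−s)H') ds. -/

import Mathlib

/-!
The product `F s = exp ((c s) • a) * exp ((c (t - s)) • b)` runs from `exp ((c t) • b)` at `s = 0`
to `exp ((c t) • a)` at `s = t`, and by the product rule its derivative is
`c • exp ((c s) • a) * (a - b) * exp ((c (t - s)) • b)`; the formula is the fundamental theorem
of calculus for `F` on `[0, t]`.
-/

section ExpSmulConst

variable {𝕜 𝕂 𝔸 : Type*} [NontriviallyNormedField 𝕜] [RCLike 𝕂] [NormedAlgebra 𝕜 𝕂]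
  [NormedRing 𝔸] [NormedAlgebra 𝕂 𝔸] [NormedSpace 𝕜 𝔸] [IsScalarTower 𝕜 𝕂 𝔸] [CompleteSpace 𝔸]
  {f : 𝕜 → 𝕂} {f' : 𝕂} {s : 𝕜}

theorem HasDerivAt.exp_smul_const (hf : HasDerivAt f f' s) (x : 𝔸) :
    HasDerivAt (fun s => NormedSpace.exp (f s • x)) (f' • (NormedSpace.exp (f s • x) * x)) s :=
  (hasDerivAt_exp_smul_const x (f s)).scomp s hf

theorem HasDerivAt.exp_smul_const' (hf : HasDerivAt f f' s) (x : 𝔸) :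
    HasDerivAt (fun s => NormedSpace.exp (f s • x)) (f' • (x * NormedSpace.exp (f s • x))) s :=
  (hasDerivAt_exp_smul_const' x (f s)).scomp s hf

end ExpSmulConst

theorem exp_smul_sub_exp_smul_eq_integral {𝕂 𝔸 : Type*} [RCLike 𝕂] [NormedRing 𝔸]
    [NormedAlgebra 𝕂 𝔸] [NormedAlgebra ℝ 𝔸] [IsScalarTower ℝ 𝕂 𝔸] [CompleteSpace 𝔸]
    (c : 𝕂) (a b : 𝔸) (t : ℝ) :
    NormedSpace.exp ((c * t) • a) - NormedSpace.exp ((c * t) • b) =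
      c • ∫ s in (0 : ℝ)..t,
        NormedSpace.exp ((c * s) • a) * (a - b) * NormedSpace.exp ((c * ((t - s : ℝ) : 𝕂)) • b) := by
  set E₀ : ℝ → 𝔸 := fun s => NormedSpace.exp ((c * s) • a)
  set E₁ : ℝ → 𝔸 := fun s => NormedSpace.exp ((c * ((t - s : ℝ) : 𝕂)) • b)
  have hE₀ (s : ℝ) : HasDerivAt E₀ (c • (E₀ s * a)) s := by
    refine HasDerivAt.exp_smul_const ?_ a
    simpa using (RCLike.ofRealCLM.hasDerivAt (x := s)).const_mul c
  have hE₁ (s : ℝ) : HasDerivAt E₁ (-c • (b * E₁ s)) s := by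
    refine HasDerivAt.exp_smul_const' ?_ b
    simpa using
      ((RCLike.ofRealCLM (K := 𝕂)).hasDerivAt.scomp s ((hasDerivAt_id s).const_sub t)).const_mul c
  have hF (s : ℝ) : HasDerivAt (fun s => E₀ s * E₁ s) (c • (E₀ s * (a - b) * E₁ s)) s := by
    refine ((hE₀ s).mul (hE₁ s)).congr_deriv ?_
    rw [neg_smul, mul_neg, mul_smul_comm, mul_sub, sub_mul, smul_sub, smul_mul_assoc,
      sub_eq_add_neg, mul_assoc, mul_assoc]
  have hF'_cont : Continuous fun s => c • (E₀ s * (a - b) * E₁ s) := by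
    have h₀ : Continuous E₀ := continuous_iff_continuousAt.2 fun s => (hE₀ s).continuousAt
    have h₁ : Continuous E₁ := continuous_iff_continuousAt.2 fun s => (hE₁ s).continuousAt
    fun_prop
  rw [← intervalIntegral.integral_smul, intervalIntegral.integral_eq_sub_of_hasDerivAt
    (fun s _ => hF s) (hF'_cont.intervalIntegrable 0 t)]
  simp [E₀, E₁]

theorem duhamel_formula_general
    {H : Type*} [NormedAddCommGroup H] [InnerProductSpace ℂ H] [CompleteSpace H]
    (H₀ H₁ : H →L[ℂ] H) (t : ℝ) :
    NormedSpace.exp ((-Complex.I * (t : ℂ)) • H₀) -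
        NormedSpace.exp ((-Complex.I * (t : ℂ)) • H₁) =
      (-Complex.I) •
        ∫ s in (0 : ℝ)..t,
          NormedSpace.exp ((-Complex.I * (s : ℂ)) • H₀) * (H₀ - H₁) *
            NormedSpace.exp ((-Complex.I * ((t - s : ℝ) : ℂ)) • H₁) :=
  exp_smul_sub_exp_smul_eq_integral (-Complex.I) H₀ H₁ t

/-- Duhamel formula: for bounded selfadjoint operators `H₀`, `H₁`,
`exp(−itH₀) − exp(−itH₁) = −i ∫₀ᵗ exp(−isH₀)(H₀ − H₁)exp(−i(t−s)H₁) ds`. -/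
theorem duhamel_formula
    {H : Type*} [NormedAddCommGroup H] [InnerProductSpace ℂ H] [CompleteSpace H]
    (H₀ H₁ : H →L[ℂ] H) (hH₀ : IsSelfAdjoint H₀) (hH₁ : IsSelfAdjoint H₁) (t : ℝ) :
    NormedSpace.exp ((-Complex.I * (t : ℂ)) • H₀) -
        NormedSpace.exp ((-Complex.I * (t : ℂ)) • H₁) =
      (-Complex.I) •
        ∫ s in (0 : ℝ)..t,
          NormedSpace.exp ((-Complex.I * (s : ℂ)) • H₀) * (H₀ - H₁) *
            NormedSpace.exp ((-Complex.I * ((t - s : ℝ) : ℂ)) • H₁) :=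
  duhamel_formula_general H₀ H₁ t
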